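/- Let X ⊆ ℝⁿ be nonempty, closed, and convex, let p = (p_i) and q = (q_i) be probability vectors on {1,…,m} with strictly positive components, and set r := ∑_{i=1}^m p_i²/q_i. Let B_1,…,B_m : ℝⁿ → ℝⁿ each be L-Lipschitz, define A_i := (p_i/q_i) B_i, and suppose B := ∑_{i=1}^m p_i B_i is μ-strongly monotone with 0 < μ ≤ L. Let x* ∈ ℝⁿ satisfy x* = Π_X(x* − γ B(x*)) for every γ > 0. Set M_B := max_{1≤i≤m} ‖B_i(x*)‖₂, c := 2(1 + 2r)L²/μ², and γ_t := 2/(μ(t + c)) for t ≥ 0. Let (Ω, P) be a probability space and (I_t)_{t≥0} an i.i.d. sequence of {1,…,m}-valued random variables with P(I_t = i) = q_i for all i, t. Fix y_0 ∈ X and define the SGD iterates y_{t+1} := Π_X(y_t − γ_t A_{I_t}(y_t)) for t ≥ 0. Then for all t ≥ 1: E[‖y_t − x*‖₂²] ≤ ( (2(1 + 2r)L²/μ² − 1)‖y_0 − x*‖₂² + 8 r M_B²/μ² ) / t. -/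

import Mathlib

open MeasureTheory ProbabilityTheory
open scoped RealInnerProductSpace ENNReal

/-!
Nonexpansiveness of the projection and `x* = Π_X (x* - γ B x*)` give, for every iterate `x`,
`‖Π_X (x - γ A_i x) - x*‖² ≤ ‖x - x*‖² - 2γ ⟪A_i x - B x*, x - x*⟫ + γ² ‖A_i x - B x*‖²`.
Averaging over `i` with the sampling weights `q_i` turns `A_i x` into `B x` in the cross term,
which strong monotonicity bounds by `-2γμ ‖x - x*‖²`, while the importance weights `p_i / q_i`
bound the second moment by `2r (L² ‖x - x*‖² + M_B²)`. The iterate `y_t` depends only on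
`I_0, …, I_{t-1}`, hence is independent of `I_t`, so the mean squared error `e_t` obeys
`e_{t+1} ≤ (1 - 2/(t + c)) e_t + K/(t + c)²` with `K = 8 r M_B² / μ²`, and Chung's induction gives
`e_t ≤ ((c - 1) e_0 + K) / (t + c - 1)`.
-/

section MetricProjection

variable {F : Type*} [NormedAddCommGroup F] [InnerProductSpace ℝ F] {X : Set F} {proj : F → F}

def IsMetricProjection (X : Set F) (proj : F → F) : Prop :=
  (∀ z, proj z ∈ X) ∧ ∀ z, ∀ w ∈ X, dist z (proj z) ≤ dist z w

lemma inner_sub_proj_le_zero (hX : Convex ℝ X) (hproj : IsMetricProjection X proj) (z : F)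
    {w : F} (hw : w ∈ X) :
    ⟪z - proj z, w - proj z⟫ ≤ 0 := by
  have : Nonempty X := ⟨⟨w, hw⟩⟩
  have hbdd : BddBelow (Set.range fun w : X => ‖z - (w : F)‖) :=
    ⟨0, by rintro _ ⟨w, rfl⟩; exact norm_nonneg _⟩
  refine (norm_eq_iInf_iff_real_inner_le_zero hX (hproj.1 z)).1 (le_antisymm ?_ ?_) w hw
  · exact le_ciInf fun w => by simpa [dist_eq_norm] using hproj.2 z w w.2
  · exact ciInf_le hbdd ⟨proj z, hproj.1 z⟩

lemma norm_proj_sub_proj_le (hX : Convex ℝ X) (hproj : IsMetricProjection X proj) (u w : F) :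
    ‖proj u - proj w‖ ≤ ‖u - w‖ := by
  have hu := inner_sub_proj_le_zero hX hproj u (hproj.1 w)
  have hw := inner_sub_proj_le_zero hX hproj w (hproj.1 u)
  have hsq : ‖proj u - proj w‖ * ‖proj u - proj w‖ ≤ ‖u - w‖ * ‖proj u - proj w‖ := by
    calc ‖proj u - proj w‖ * ‖proj u - proj w‖
        = ⟪u - w, proj u - proj w⟫ + ⟪u - proj u, proj w - proj u⟫
          + ⟪w - proj w, proj u - proj w⟫ := by
          rw [← real_inner_self_eq_norm_mul_norm]
          simp only [inner_sub_left, inner_sub_right, real_inner_comm]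
          ring
      _ ≤ ⟪u - w, proj u - proj w⟫ := by linarith
      _ ≤ ‖u - w‖ * ‖proj u - proj w‖ := real_inner_le_norm _ _
  rcases (norm_nonneg (proj u - proj w)).eq_or_lt with h | h
  · rw [← h]; exact norm_nonneg _
  · exact le_of_mul_le_mul_right hsq h

lemma IsMetricProjection.continuous (hproj : IsMetricProjection X proj) (hX : Convex ℝ X) :
    Continuous proj :=
  (LipschitzWith.of_dist_le_mul (K := 1) fun u w => by
    simpa [dist_eq_norm] using norm_proj_sub_proj_le hX hproj u w).continuous

lemma norm_proj_sub_fixedPoint_sq_le (hX : Convex ℝ X) (hproj : IsMetricProjection X proj)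
    {xstar d : F} {γ : ℝ}
    (hfix : xstar = proj (xstar - γ • d)) (x a : F) :
    ‖proj (x - γ • a) - xstar‖ ^ 2
      ≤ ‖x - xstar‖ ^ 2 - 2 * γ * ⟪a - d, x - xstar⟫ + γ ^ 2 * ‖a - d‖ ^ 2 := by
  have hnonexp : ‖proj (x - γ • a) - xstar‖ ≤ ‖(x - xstar) - γ • (a - d)‖ :=
    calc ‖proj (x - γ • a) - xstar‖ = ‖proj (x - γ • a) - proj (xstar - γ • d)‖ := by
          rw [← hfix]
      _ ≤ ‖(x - γ • a) - (xstar - γ • d)‖ := norm_proj_sub_proj_le hX hproj _ _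
      _ = ‖(x - xstar) - γ • (a - d)‖ := by rw [smul_sub]; congr 1; abel
  calc ‖proj (x - γ • a) - xstar‖ ^ 2
      ≤ ‖(x - xstar) - γ • (a - d)‖ ^ 2 := by gcongr
    _ = _ := by
        rw [norm_sub_sq_real, real_inner_smul_right, norm_smul, Real.norm_eq_abs, mul_pow,
          sq_abs, real_inner_comm]
        ring

end MetricProjection

section ImportanceSampling

variable {ι F : Type*} [Fintype ι] [NormedAddCommGroup F] [InnerProductSpace ℝ F]

lemma sum_mul_norm_sub_sum_smul_sq_le {q : ι → ℝ} (hqs : ∑ i, q i = 1) (v : ι → F) :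
    ∑ i, q i * ‖v i - ∑ j, q j • v j‖ ^ 2 ≤ ∑ i, q i * ‖v i‖ ^ 2 := by
  set m := ∑ j, q j • v j
  have hterm : ∀ i, q i * ‖v i - m‖ ^ 2
      = q i * ‖v i‖ ^ 2 - 2 * ⟪q i • v i, m⟫ + q i * ‖m‖ ^ 2 := fun i => by
    rw [norm_sub_sq_real, real_inner_smul_left]
    ring
  have hexpand : ∑ i, q i * ‖v i - m‖ ^ 2 = ∑ i, q i * ‖v i‖ ^ 2 - ‖m‖ ^ 2 := by
    rw [Finset.sum_congr rfl fun i _ => hterm i, Finset.sum_add_distrib, Finset.sum_sub_distrib,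
      ← Finset.mul_sum, ← sum_inner, real_inner_self_eq_norm_sq, ← Finset.sum_mul, hqs]
    ring
  rw [hexpand]
  linarith [sq_nonneg ‖m‖]

lemma sum_smul_div_smul {p q : ι → ℝ} (hq : ∀ i, q i ≠ 0) (v : ι → F) :
    ∑ i, q i • (p i / q i) • v i = ∑ i, p i • v i :=
  Finset.sum_congr rfl fun i _ => by rw [smul_smul, mul_div_cancel₀ _ (hq i)]

lemma sum_mul_norm_div_smul_sq_le {p q : ι → ℝ} (hq : ∀ i, 0 < q i) {v : ι → F} {C : ℝ}
    (hv : ∀ i, ‖v i‖ ≤ C) :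
    ∑ i, q i * ‖(p i / q i) • v i‖ ^ 2 ≤ (∑ i, p i ^ 2 / q i) * C ^ 2 := by
  rw [Finset.sum_mul]
  refine Finset.sum_le_sum fun i _ => ?_
  have hvC : ‖v i‖ ^ 2 ≤ C ^ 2 := pow_le_pow_left₀ (norm_nonneg _) (hv i) 2
  calc q i * ‖(p i / q i) • v i‖ ^ 2 = p i ^ 2 / q i * ‖v i‖ ^ 2 := by
        rw [norm_smul, mul_pow, Real.norm_eq_abs, sq_abs]
        field_simp [(hq i).ne']
    _ ≤ p i ^ 2 / q i * C ^ 2 := by have := (hq i).le; gcongr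

lemma sum_mul_norm_div_smul_sub_sq_le {p q : ι → ℝ} (hq : ∀ i, 0 < q i) (hqs : ∑ i, q i = 1)
    {B : ι → F → F} {L MB : ℝ} {x xstar : F}
    (hLip : ∀ i, ‖B i x - B i xstar‖ ≤ L * ‖x - xstar‖) (hMB : ∀ i, ‖B i xstar‖ ≤ MB) :
    ∑ i, q i * ‖(p i / q i) • B i x - ∑ j, p j • B j xstar‖ ^ 2
      ≤ 2 * (∑ i, p i ^ 2 / q i) * (L ^ 2 * ‖x - xstar‖ ^ 2 + MB ^ 2) := by
  set a := fun i => (p i / q i) • B i x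
  set b := fun i => (p i / q i) • B i xstar
  have hmean : ∑ j, p j • B j xstar = ∑ j, q j • b j :=
    (sum_smul_div_smul (fun i => (hq i).ne') _).symm
  have hsplit : ∀ i, q i * ‖a i - ∑ j, q j • b j‖ ^ 2
      ≤ 2 * (q i * ‖a i - b i‖ ^ 2) + 2 * (q i * ‖b i - ∑ j, q j • b j‖ ^ 2) := fun i => by
    have := (pow_le_pow_left₀ (norm_nonneg _)
      (norm_sub_le_norm_sub_add_norm_sub (a i) (b i) (∑ j, q j • b j)) 2).trans add_sq_le
    nlinarith [(hq i).le]
  have hlip : ∑ i, q i * ‖a i - b i‖ ^ 2 ≤ (∑ i, p i ^ 2 / q i) * (L * ‖x - xstar‖) ^ 2 := by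
    simp only [a, b, ← smul_sub]
    exact sum_mul_norm_div_smul_sq_le hq hLip
  have hvar : ∑ i, q i * ‖b i - ∑ j, q j • b j‖ ^ 2 ≤ (∑ i, p i ^ 2 / q i) * MB ^ 2 :=
    (sum_mul_norm_sub_sum_smul_sq_le hqs b).trans (sum_mul_norm_div_smul_sq_le hq hMB)
  rw [hmean]
  calc ∑ i, q i * ‖a i - ∑ j, q j • b j‖ ^ 2
      ≤ ∑ i, (2 * (q i * ‖a i - b i‖ ^ 2) + 2 * (q i * ‖b i - ∑ j, q j • b j‖ ^ 2)) :=
        Finset.sum_le_sum fun i _ => hsplit i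
    _ = 2 * ∑ i, q i * ‖a i - b i‖ ^ 2 + 2 * ∑ i, q i * ‖b i - ∑ j, q j • b j‖ ^ 2 := by
        rw [Finset.sum_add_distrib, Finset.mul_sum, Finset.mul_sum]
    _ ≤ _ := by nlinarith

end ImportanceSampling

section ProjectedStep

variable {ι F : Type*} [Fintype ι] [NormedAddCommGroup F] [InnerProductSpace ℝ F]
  {X : Set F} {proj : F → F}

theorem sum_mul_norm_proj_step_sub_sq_le (hX : Convex ℝ X) (hproj : IsMetricProjection X proj)
    {p q : ι → ℝ} (hq : ∀ i, 0 < q i) (hqs : ∑ i, q i = 1) {B : ι → F → F} {L μ MB γ : ℝ}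
    {x xstar : F}
    (hLip : ∀ i, ‖B i x - B i xstar‖ ≤ L * ‖x - xstar‖)
    (hmono : μ * ‖x - xstar‖ ^ 2 ≤ ⟪∑ i, p i • B i x - ∑ i, p i • B i xstar, x - xstar⟫)
    (hMB : ∀ i, ‖B i xstar‖ ≤ MB) (hfix : xstar = proj (xstar - γ • ∑ i, p i • B i xstar))
    (hγ : 0 ≤ γ) (hγL : 2 * (∑ i, p i ^ 2 / q i) * L ^ 2 * γ ≤ μ) :
    ∑ i, q i * ‖proj (x - γ • (p i / q i) • B i x) - xstar‖ ^ 2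
      ≤ (1 - μ * γ) * ‖x - xstar‖ ^ 2 + 2 * (∑ i, p i ^ 2 / q i) * MB ^ 2 * γ ^ 2 := by
  set m := ∑ i, p i • B i xstar
  set a := fun i => (p i / q i) • B i x
  have hmean : ∑ i, q i * ⟪a i - m, x - xstar⟫ = ⟪∑ i, p i • B i x - m, x - xstar⟫ := by
    simp_rw [← real_inner_smul_left, ← sum_inner, smul_sub, Finset.sum_sub_distrib,
      ← Finset.sum_smul, hqs, one_smul, a, sum_smul_div_smul (fun i => (hq i).ne')]
  have hsecond := sum_mul_norm_div_smul_sub_sq_le (p := p) hq hqs hLip hMB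
  calc ∑ i, q i * ‖proj (x - γ • a i) - xstar‖ ^ 2
      ≤ ∑ i, q i * (‖x - xstar‖ ^ 2 - 2 * γ * ⟪a i - m, x - xstar⟫ + γ ^ 2 * ‖a i - m‖ ^ 2) :=
        Finset.sum_le_sum fun i _ => mul_le_mul_of_nonneg_left
          (norm_proj_sub_fixedPoint_sq_le hX hproj hfix x (a i)) (hq i).le
    _ = ‖x - xstar‖ ^ 2 - 2 * γ * ⟪∑ i, p i • B i x - m, x - xstar⟫
          + γ ^ 2 * ∑ i, q i * ‖a i - m‖ ^ 2 := by
        rw [Finset.sum_congr rfl fun i _ => show q i * (‖x - xstar‖ ^ 2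
            - 2 * γ * ⟪a i - m, x - xstar⟫ + γ ^ 2 * ‖a i - m‖ ^ 2) = q i * ‖x - xstar‖ ^ 2
            - 2 * γ * (q i * ⟪a i - m, x - xstar⟫) + γ ^ 2 * (q i * ‖a i - m‖ ^ 2) by ring,
          Finset.sum_add_distrib, Finset.sum_sub_distrib, ← Finset.sum_mul, ← Finset.mul_sum,
          ← Finset.mul_sum, hqs, hmean, one_mul]
    _ ≤ _ := by
        nlinarith [mul_le_mul_of_nonneg_left hmono hγ,
          mul_le_mul_of_nonneg_left hsecond (sq_nonneg γ),
          mul_le_mul_of_nonneg_left hγL (mul_nonneg hγ (sq_nonneg ‖x - xstar‖))]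

end ProjectedStep

section Sampling

variable {Ω α E ι : Type*} [MeasurableSpace α] [MeasurableSpace E] [MeasurableSpace ι]

lemma lintegral_comp_eq_lintegral_sum_of_indepFun [MeasurableSpace Ω] {P : Measure Ω}
    [Fintype ι] [MeasurableSingletonClass ι] {X : Ω → α} {J : Ω → ι}
    (hX : Measurable X) (hJ : Measurable J) (hXJ : IndepFun X J P) {f : α → ι → ℝ≥0∞}
    (hf : ∀ i, Measurable fun x => f x i) :
    ∫⁻ ω, f (X ω) (J ω) ∂P = ∫⁻ ω, ∑ i, P (J ⁻¹' {i}) * f (X ω) i ∂P := by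
  have hsplit : ∀ ω, f (X ω) (J ω) = ∑ i, f (X ω) i * ({i} : Set ι).indicator 1 (J ω) := by
    intro ω
    rw [Finset.sum_eq_single (J ω) (fun i _ hi => by simp [Ne.symm hi]) (by simp)]
    simp
  have hind_meas : ∀ i, Measurable (({i} : Set ι).indicator (1 : ι → ℝ≥0∞)) :=
    fun i => measurable_one.indicator (measurableSet_singleton i)
  have hterm : ∀ i, ∫⁻ ω, f (X ω) i * ({i} : Set ι).indicator 1 (J ω) ∂P
      = P (J ⁻¹' {i}) * ∫⁻ ω, f (X ω) i ∂P := by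
    intro i
    have h := lintegral_mul_eq_lintegral_mul_lintegral_of_indepFun ((hf i).comp hX)
      ((hind_meas i).comp hJ) (hXJ.comp (hf i) (hind_meas i))
    have hJi : ∫⁻ ω, ({i} : Set ι).indicator 1 (J ω) ∂P = P (J ⁻¹' {i}) := by
      rw [← lintegral_indicator_one (hJ (measurableSet_singleton i))]
      rfl
    exact h.trans (by rw [Function.comp_def, Function.comp_def, hJi, mul_comm])
  calc ∫⁻ ω, f (X ω) (J ω) ∂P
      = ∑ i, ∫⁻ ω, f (X ω) i * ({i} : Set ι).indicator 1 (J ω) ∂P := by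
        simp_rw [hsplit]
        exact lintegral_finsetSum _ fun i _ => ((hf i).comp hX).mul ((hind_meas i).comp hJ)
    _ = ∑ i, ∫⁻ ω, P (J ⁻¹' {i}) * f (X ω) i ∂P := by
        simp_rw [hterm]
        exact Finset.sum_congr rfl fun i _ => (lintegral_const_mul _ ((hf i).comp hX)).symm
    _ = ∫⁻ ω, ∑ i, P (J ⁻¹' {i}) * f (X ω) i ∂P :=
        (lintegral_finsetSum _ fun i _ => ((hf i).comp hX).const_mul _).symm

lemma measurable_iSup_comap_of_recursion [Countable ι] [MeasurableSingletonClass ι]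
    {I : ℕ → Ω → ι} {G : ℕ → E → ι → E}
    (hG : ∀ t i, Measurable fun x => G t x i) {y : ℕ → Ω → E} {y0 : E}
    (hy0 : ∀ ω, y 0 ω = y0) (hy : ∀ t ω, y (t + 1) ω = G t (y t ω) (I t ω)) (t : ℕ) :
    Measurable[⨆ j ∈ Set.Iio t, MeasurableSpace.comap (I j) inferInstance] (y t) := by
  induction t with
  | zero =>
    rw [show y 0 = fun _ => y0 from funext hy0]
    exact measurable_const
  | succ t ih =>
    have hpast : (⨆ j ∈ Set.Iio t, MeasurableSpace.comap (I j) inferInstance)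
        ≤ ⨆ j ∈ Set.Iio (t + 1), MeasurableSpace.comap (I j) inferInstance :=
      biSup_mono fun j (hj : j < t) => (hj.trans (Nat.lt_succ_self t) : j < t + 1)
    have hnow : MeasurableSpace.comap (I t) inferInstance
        ≤ ⨆ j ∈ Set.Iio (t + 1), MeasurableSpace.comap (I j) inferInstance :=
      le_biSup (fun j => MeasurableSpace.comap (I j) inferInstance) (Nat.lt_succ_self t)
    rw [show y (t + 1) = fun ω => G t (y t ω) (I t ω) from funext (hy t)]
    exact (measurable_from_prod_countable_left (f := fun z : E × ι => G t z.1 z.2)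
      fun i => hG t i).comp ((ih.mono hpast le_rfl).prodMk
        ((comap_measurable (I t)).mono hnow le_rfl))

lemma indepFun_of_measurable_iSup_comap [MeasurableSpace Ω] {P : Measure Ω} {I : ℕ → Ω → ι}
    (hI : ∀ t, Measurable (I t)) (hindep : iIndepFun I P) {t : ℕ} {Y : Ω → E}
    (hY : Measurable[⨆ j ∈ Set.Iio t, MeasurableSpace.comap (I j) inferInstance] Y) :
    IndepFun Y (I t) P := by
  have h := indep_iSup_of_disjoint (fun j => (hI j).comap_le) hindep.iIndep
    (Set.disjoint_singleton_right.2 (lt_irrefl t) : Disjoint (Set.Iio t) {t})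
  rw [iSup_singleton] at h
  exact (IndepFun_iff_Indep _ _ _).2 (indep_of_indep_of_le_left h hY.comap_le)

lemma lintegral_ofReal_recursion_le [MeasurableSpace Ω] {P : Measure Ω} [IsProbabilityMeasure P]
    [Fintype ι] [MeasurableSingletonClass ι] {I : ℕ → Ω → ι} (hI : ∀ t, Measurable (I t))
    (hindep : iIndepFun I P) {G : ℕ → E → ι → E} (hG : ∀ t i, Measurable fun x => G t x i)
    {y : ℕ → Ω → E} {y0 : E} (hy0 : ∀ ω, y 0 ω = y0)
    (hy : ∀ t ω, y (t + 1) ω = G t (y t ω) (I t ω))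
    {g : E → ℝ} (hg : Measurable g) (hg0 : ∀ x, 0 ≤ g x) {a b : ℕ → ℝ}
    (hstep : ∀ t x, ∑ i, (P (I t ⁻¹' {i})).toReal * g (G t x i) ≤ a t * g x + b t) (t : ℕ) :
    ∫⁻ ω, ENNReal.ofReal (g (y (t + 1) ω)) ∂P
      ≤ ENNReal.ofReal (a t) * ∫⁻ ω, ENNReal.ofReal (g (y t ω)) ∂P + ENNReal.ofReal (b t) := by
  have hy_past := measurable_iSup_comap_of_recursion hG hy0 hy t
  have hy_meas : Measurable (y t) := hy_past.mono (iSup₂_le fun j _ => (hI j).comap_le) le_rfl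
  have hpointwise : ∀ x, ∑ i, P (I t ⁻¹' {i}) * ENNReal.ofReal (g (G t x i))
      ≤ ENNReal.ofReal (a t) * ENNReal.ofReal (g x) + ENNReal.ofReal (b t) := by
    intro x
    calc ∑ i, P (I t ⁻¹' {i}) * ENNReal.ofReal (g (G t x i))
        = ENNReal.ofReal (∑ i, (P (I t ⁻¹' {i})).toReal * g (G t x i)) := by
          rw [ENNReal.ofReal_sum_of_nonneg fun i _ => mul_nonneg ENNReal.toReal_nonneg (hg0 _)]
          simp_rw [ENNReal.ofReal_mul ENNReal.toReal_nonneg, ENNReal.ofReal_toReal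
            (measure_ne_top P _)]
      _ ≤ ENNReal.ofReal (a t * g x + b t) := ENNReal.ofReal_le_ofReal (hstep t x)
      _ ≤ ENNReal.ofReal (a t) * ENNReal.ofReal (g x) + ENNReal.ofReal (b t) := by
          rw [← ENNReal.ofReal_mul' (hg0 x)]
          exact ENNReal.ofReal_add_le
  calc ∫⁻ ω, ENNReal.ofReal (g (y (t + 1) ω)) ∂P
      = ∫⁻ ω, ∑ i, P (I t ⁻¹' {i}) * ENNReal.ofReal (g (G t (y t ω) i)) ∂P := by
        simp_rw [hy]
        exact lintegral_comp_eq_lintegral_sum_of_indepFun hy_meas (hI t)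
          (indepFun_of_measurable_iSup_comap hI hindep hy_past)
          fun i => (hg.comp (hG t i)).ennreal_ofReal
    _ ≤ ∫⁻ ω, ENNReal.ofReal (a t) * ENNReal.ofReal (g (y t ω)) + ENNReal.ofReal (b t) ∂P :=
        lintegral_mono fun ω => hpointwise (y t ω)
    _ = _ := by
        rw [lintegral_add_right _ measurable_const, lintegral_const_mul, lintegral_const,
          measure_univ, mul_one]
        exact (hg.comp hy_meas).ennreal_ofReal

end Sampling

lemma one_sub_two_div_mul_div_add_div_sq_le {s K N : ℝ} (hs : 2 ≤ s) (hK : 0 ≤ K) (hKN : K ≤ N) :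
    (1 - 2 / s) * (N / (s - 1)) + K / s ^ 2 ≤ N / s := by
  have hs0 : 0 < s := by linarith
  have hs1 : 0 < s - 1 := by linarith
  have hcontr : (1 - 2 / s) * (N / (s - 1)) = N / s - N / (s * (s - 1)) := by
    field_simp
    ring
  have hnoise : K / s ^ 2 ≤ N / (s * (s - 1)) :=
    div_le_div₀ (hK.trans hKN) hKN (by positivity) (by nlinarith)
  linarith

lemma le_ofReal_div_of_chung_recursion {E : ℕ → ℝ≥0∞} {c K e0 : ℝ} (hc : 2 ≤ c) (hK : 0 ≤ K)
    (he0 : 0 ≤ e0) (h0 : E 0 = ENNReal.ofReal e0)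
    (hrec : ∀ t : ℕ, E (t + 1)
      ≤ ENNReal.ofReal (1 - 2 / (t + c)) * E t + ENNReal.ofReal (K / (t + c) ^ 2))
    {t : ℕ} (ht : 1 ≤ t) : E t ≤ ENNReal.ofReal (((c - 1) * e0 + K) / t) := by
  set N := (c - 1) * e0 + K
  have hKN : K ≤ N := le_add_of_nonneg_left (mul_nonneg (by linarith) he0)
  have hbound : ∀ t : ℕ, E t ≤ ENNReal.ofReal (N / (t + c - 1)) := by
    intro t
    induction t with
    | zero =>
      rw [h0, Nat.cast_zero, zero_add]
      exact ENNReal.ofReal_le_ofReal ((le_div_iff₀ (by linarith)).2 (by linarith))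
    | succ t ih =>
      have hs : 2 ≤ (t : ℝ) + c := by linarith [t.cast_nonneg (α := ℝ)]
      have hcontr : 0 ≤ 1 - 2 / ((t : ℝ) + c) := by
        rw [sub_nonneg, div_le_one (by linarith)]; exact hs
      calc E (t + 1)
          ≤ ENNReal.ofReal (1 - 2 / (t + c)) * ENNReal.ofReal (N / (t + c - 1))
            + ENNReal.ofReal (K / (t + c) ^ 2) := (hrec t).trans (by gcongr)
        _ = ENNReal.ofReal ((1 - 2 / (t + c)) * (N / (t + c - 1)) + K / (t + c) ^ 2) := by
          rw [ENNReal.ofReal_add (mul_nonneg hcontr (div_nonneg (by linarith) (by linarith)))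
            (by positivity), ENNReal.ofReal_mul hcontr]
        _ ≤ ENNReal.ofReal (N / ((t + 1 : ℕ) + c - 1)) := by
          refine ENNReal.ofReal_le_ofReal ?_
          rw [show ((t + 1 : ℕ) : ℝ) + c - 1 = t + c by push_cast; ring]
          exact one_sub_two_div_mul_div_add_div_sq_le hs hK hKN
  have ht' : (1 : ℝ) ≤ t := by exact_mod_cast ht
  exact (hbound t).trans (ENNReal.ofReal_le_ofReal
    (div_le_div_of_nonneg_left (by linarith) (by linarith) (by linarith)))

theorem lintegral_norm_projected_sgd_sub_sq_succ_le {Ω ι F : Type*} [MeasurableSpace Ω]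
    {P : Measure Ω} [IsProbabilityMeasure P] [Fintype ι] [MeasurableSpace ι]
    [MeasurableSingletonClass ι] [NormedAddCommGroup F] [InnerProductSpace ℝ F]
    [MeasurableSpace F] [BorelSpace F] {X : Set F} {proj : F → F} (hX : Convex ℝ X)
    (hproj : IsMetricProjection X proj) {p q : ι → ℝ} (hq : ∀ i, 0 < q i) (hqs : ∑ i, q i = 1)
    {B : ι → F → F} {L μ MB : ℝ} {xstar : F} (hLip : ∀ i x y, ‖B i x - B i y‖ ≤ L * ‖x - y‖)
    (hmono : ∀ x, μ * ‖x - xstar‖ ^ 2 ≤ ⟪∑ i, p i • B i x - ∑ i, p i • B i xstar, x - xstar⟫)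
    (hMB : ∀ i, ‖B i xstar‖ ≤ MB)
    (hfix : ∀ γ : ℝ, 0 < γ → xstar = proj (xstar - γ • ∑ i, p i • B i xstar))
    {γ : ℕ → ℝ} (hγ : ∀ t, 0 < γ t) (hγL : ∀ t, 2 * (∑ i, p i ^ 2 / q i) * L ^ 2 * γ t ≤ μ)
    {I : ℕ → Ω → ι} (hI : ∀ t, Measurable (I t)) (hindep : iIndepFun I P)
    (hIdist : ∀ t i, P (I t ⁻¹' {i}) = ENNReal.ofReal (q i))
    {y : ℕ → Ω → F} {y0 : F} (hy0 : ∀ ω, y 0 ω = y0)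
    (hy : ∀ t ω, y (t + 1) ω = proj (y t ω - γ t • (p (I t ω) / q (I t ω)) • B (I t ω) (y t ω)))
    (t : ℕ) :
    ∫⁻ ω, ENNReal.ofReal (‖y (t + 1) ω - xstar‖ ^ 2) ∂P
      ≤ ENNReal.ofReal (1 - μ * γ t) * ∫⁻ ω, ENNReal.ofReal (‖y t ω - xstar‖ ^ 2) ∂P
        + ENNReal.ofReal (2 * (∑ i, p i ^ 2 / q i) * MB ^ 2 * γ t ^ 2) := by
  have hproj_cont := hproj.continuous hX
  have hB : ∀ i, Continuous (B i) := fun i => (LipschitzWith.of_dist_le' fun x y => by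
    simpa [dist_eq_norm] using hLip i x y).continuous
  refine lintegral_ofReal_recursion_le hI hindep
    (G := fun t x i => proj (x - γ t • (p i / q i) • B i x))
    (fun t i => (by fun_prop : Continuous _).measurable) hy0 hy
    (g := fun x => ‖x - xstar‖ ^ 2) (a := fun t => 1 - μ * γ t)
    (b := fun t => 2 * (∑ i, p i ^ 2 / q i) * MB ^ 2 * γ t ^ 2) (by fun_prop)
    (fun x => sq_nonneg _) (fun t x => ?_) t
  simp only [hIdist, ENNReal.toReal_ofReal (hq _).le]
  exact sum_mul_norm_proj_step_sub_sq_le hX hproj hq hqs (fun i => hLip i x xstar) (hmono x)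
    hMB (hfix _ (hγ t)) (hγ t).le (hγL t)

theorem stmt_9_general {n m : ℕ}
    (X : Set (EuclideanSpace ℝ (Fin n)))
    (hXcv : Convex ℝ X)
    (p q : Fin m → ℝ)
    (hq : ∀ i, 0 < q i)
    (hqs : ∑ i, q i = 1)
    (r : ℝ) (hr : r = ∑ i, (p i) ^ 2 / q i)
    (B : Fin m → EuclideanSpace ℝ (Fin n) → EuclideanSpace ℝ (Fin n))
    (L μ : ℝ) (hμ : 0 < μ) (hμL : μ ≤ L)
    (hLip : ∀ i x y, ‖B i x - B i y‖ ≤ L * ‖x - y‖)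
    (A : Fin m → EuclideanSpace ℝ (Fin n) → EuclideanSpace ℝ (Fin n))
    (hA : ∀ i x, A i x = (p i / q i) • B i x)
    (Bbar : EuclideanSpace ℝ (Fin n) → EuclideanSpace ℝ (Fin n))
    (hBbar : ∀ x, Bbar x = ∑ i, p i • B i x)
    (hmono : ∀ x y, μ * ‖x - y‖ ^ 2 ≤ ⟪Bbar x - Bbar y, x - y⟫)
    (proj : EuclideanSpace ℝ (Fin n) → EuclideanSpace ℝ (Fin n))
    (hproj_mem : ∀ z, proj z ∈ X)
    (hproj_near : ∀ z, ∀ w ∈ X, dist z (proj z) ≤ dist z w)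
    (xstar : EuclideanSpace ℝ (Fin n))
    (hfix : ∀ γ : ℝ, 0 < γ → xstar = proj (xstar - γ • Bbar xstar))
    (MB : ℝ) (hMB : IsGreatest (Set.range fun i => ‖B i xstar‖) MB)
    (γ : ℕ → ℝ)
    (hγ : ∀ t : ℕ, γ t = 2 / (μ * (t + 2 * (1 + 2 * r) * L ^ 2 / μ ^ 2)))
    {Ω : Type*} [MeasurableSpace Ω] (P : Measure Ω) [IsProbabilityMeasure P]
    (I : ℕ → Ω → Fin m) (hImeas : ∀ t, Measurable (I t))
    (hIindep : iIndepFun I P)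
    (hIdist : ∀ t i, P {ω | I t ω = i} = ENNReal.ofReal (q i))
    (y0 : EuclideanSpace ℝ (Fin n))
    (y : ℕ → Ω → EuclideanSpace ℝ (Fin n))
    (hy0 : ∀ ω, y 0 ω = y0)
    (hyrec : ∀ t ω, y (t + 1) ω = proj (y t ω - γ t • A (I t ω) (y t ω))) :
    ∀ t : ℕ, 1 ≤ t →
      ∫⁻ ω, ENNReal.ofReal (‖y t ω - xstar‖ ^ 2) ∂P
        ≤ ENNReal.ofReal
            (((2 * (1 + 2 * r) * L ^ 2 / μ ^ 2 - 1) * ‖y0 - xstar‖ ^ 2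
              + 8 * r * MB ^ 2 / μ ^ 2) / t) := by
  intro t ht
  obtain rfl : A = fun i x => (p i / q i) • B i x := funext fun i => funext (hA i)
  simp_rw [hBbar] at hmono hfix
  subst hr
  set r := ∑ i, p i ^ 2 / q i
  have hr0 : 0 ≤ r := Finset.sum_nonneg fun i _ => div_nonneg (sq_nonneg _) (hq i).le
  set c := 2 * (1 + 2 * r) * L ^ 2 / μ ^ 2 with hc
  have hc2 : 2 ≤ c := by
    rw [le_div_iff₀ (by positivity)]
    nlinarith [pow_le_pow_left₀ hμ.le hμL 2]
  have hs : ∀ t : ℕ, 0 < (t : ℝ) + c := fun t => by linarith [t.cast_nonneg (α := ℝ)]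
  have hγpos : ∀ t : ℕ, 0 < γ t := fun t => by
    rw [hγ]; exact div_pos two_pos (mul_pos hμ (hs t))
  have hγL : ∀ t : ℕ, 2 * r * L ^ 2 * γ t ≤ μ := fun t => by
    have hμc : μ ^ 2 * c = 2 * (1 + 2 * r) * L ^ 2 := by rw [hc]; field_simp
    rw [hγ, ← mul_div_assoc, div_le_iff₀ (mul_pos hμ (hs t))]
    nlinarith [mul_nonneg (sq_nonneg μ) (t.cast_nonneg (α := ℝ)), sq_nonneg L]
  refine le_ofReal_div_of_chung_recursion
    (E := fun t => ∫⁻ ω, ENNReal.ofReal (‖y t ω - xstar‖ ^ 2) ∂P) hc2 (by positivity)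
    (sq_nonneg _) (by simp [hy0]) (fun t => ?_) ht
  convert lintegral_norm_projected_sgd_sub_sq_succ_le hXcv ⟨hproj_mem, hproj_near⟩ hq hqs hLip
    (fun x => hmono x xstar) (fun i => hMB.2 ⟨i, rfl⟩) hfix hγpos hγL hImeas hIindep hIdist hy0
    hyrec t using 3
  · rw [hγ]; field_simp
  · rw [hγ]; field_simp; ring

theorem stmt_9 {n m : ℕ} (hm : 0 < m)
    (X : Set (EuclideanSpace ℝ (Fin n)))
    (hXne : X.Nonempty) (hXcl : IsClosed X) (hXcv : Convex ℝ X)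
    (p q : Fin m → ℝ)
    (hp : ∀ i, 0 < p i) (hq : ∀ i, 0 < q i)
    (hps : ∑ i, p i = 1) (hqs : ∑ i, q i = 1)
    (r : ℝ) (hr : r = ∑ i, (p i) ^ 2 / q i)
    (B : Fin m → EuclideanSpace ℝ (Fin n) → EuclideanSpace ℝ (Fin n))
    (L μ : ℝ) (hμ : 0 < μ) (hμL : μ ≤ L)
    (hLip : ∀ i x y, ‖B i x - B i y‖ ≤ L * ‖x - y‖)
    (A : Fin m → EuclideanSpace ℝ (Fin n) → EuclideanSpace ℝ (Fin n))
    (hA : ∀ i x, A i x = (p i / q i) • B i x)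
    (Bbar : EuclideanSpace ℝ (Fin n) → EuclideanSpace ℝ (Fin n))
    (hBbar : ∀ x, Bbar x = ∑ i, p i • B i x)
    (hmono : ∀ x y, μ * ‖x - y‖ ^ 2 ≤ ⟪Bbar x - Bbar y, x - y⟫)
    (proj : EuclideanSpace ℝ (Fin n) → EuclideanSpace ℝ (Fin n))
    (hproj_mem : ∀ z, proj z ∈ X)
    (hproj_near : ∀ z, ∀ w ∈ X, dist z (proj z) ≤ dist z w)
    (xstar : EuclideanSpace ℝ (Fin n))
    (hfix : ∀ γ : ℝ, 0 < γ → xstar = proj (xstar - γ • Bbar xstar))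
    (MB : ℝ) (hMB : IsGreatest (Set.range fun i => ‖B i xstar‖) MB)
    (γ : ℕ → ℝ)
    (hγ : ∀ t : ℕ, γ t = 2 / (μ * (t + 2 * (1 + 2 * r) * L ^ 2 / μ ^ 2)))
    {Ω : Type*} [MeasurableSpace Ω] (P : Measure Ω) [IsProbabilityMeasure P]
    (I : ℕ → Ω → Fin m) (hImeas : ∀ t, Measurable (I t))
    (hIindep : iIndepFun I P)
    (hIdist : ∀ t i, P {ω | I t ω = i} = ENNReal.ofReal (q i))
    (y0 : EuclideanSpace ℝ (Fin n)) (hy0X : y0 ∈ X)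
    (y : ℕ → Ω → EuclideanSpace ℝ (Fin n))
    (hy0 : ∀ ω, y 0 ω = y0)
    (hyrec : ∀ t ω, y (t + 1) ω = proj (y t ω - γ t • A (I t ω) (y t ω))) :
    ∀ t : ℕ, 1 ≤ t →
      ∫⁻ ω, ENNReal.ofReal (‖y t ω - xstar‖ ^ 2) ∂P
        ≤ ENNReal.ofReal
            (((2 * (1 + 2 * r) * L ^ 2 / μ ^ 2 - 1) * ‖y0 - xstar‖ ^ 2
              + 8 * r * MB ^ 2 / μ ^ 2) / t) :=
  stmt_9_general X hXcv p q hq hqs r hr B L μ hμ hμL hLip A hA Bbar hBbar hmono proj hproj_mem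
    hproj_near xstar hfix MB hMB γ hγ P I hImeas hIindep hIdist y0 y hy0 hyrec
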